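/- Let t̄ > 0 and 0 < ζ₀ < 1. Let γ₁, γ₂ : [0,t̄] → ℝ be Lipschitz with γ₁ < 0 < γ₂ on (0,t̄), γ₁(0) = γ₁(t̄) = γ₂(0) = γ₂(t̄) = 0, γ₁ convex and γ₂ concave. Then there exists a constant C > 0, depending only on γ₁, γ₂, t̄ and ζ₀, such that for every increasing bijection λ : [0,t̄] → [0,t̄] with λ(0) = 0, λ(t̄) = t̄ and with both λ and λ⁻¹ Lipschitz with constant at most (1+ζ₀)/(1−ζ₀), one has γ₂(λ(s)) − γ₁(s) ≥ C·min{ s + λ(s), 2t̄ − (s + λ(s)) } for all s ∈ [0,t̄]. -/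

import Mathlib

/-!
The width is bounded below by `γ₂ (λ s)` alone, since `γ₁ ≤ 0`. A concave function vanishing at
both ends of `[0, t̄]` dominates the tent of height `γ₂ (t̄/2)`, so `γ₂ (λ s)` is at least a multiple
of `min (λ s) (t̄ - λ s)`. Comparing `λ s` with `λ 0 = 0` and `λ t̄ = t̄` through the bound on `λ⁻¹`
gives `s ≤ K λ s` and `t̄ - s ≤ K (t̄ - λ s)`, which makes `min (λ s) (t̄ - λ s)` comparable to
`min (s + λ s) (2t̄ - (s + λ s))`.
-/

open Set

theorem ConcaveOn.sub_mul_add_sub_mul_le {s : Set ℝ} {f : ℝ → ℝ} (hf : ConcaveOn ℝ s f)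
    {x y z : ℝ} (hx : x ∈ s) (hz : z ∈ s) (hxy : x ≤ y) (hyz : y ≤ z) :
    (z - y) * f x + (y - x) * f z ≤ (z - x) * f y := by
  rcases (hxy.trans hyz).eq_or_lt with rfl | hxz
  · obtain rfl : y = x := le_antisymm hyz hxy
    simp
  have hzx : 0 < z - x := sub_pos.2 hxz
  have hzx' : z - x ≠ 0 := hzx.ne'
  have key := hf.2 hx hz (div_nonneg (sub_nonneg.2 hyz) hzx.le)
    (div_nonneg (sub_nonneg.2 hxy) hzx.le) (by field_simp; ring)
  have hy : ((z - y) / (z - x)) • x + ((y - x) / (z - x)) • z = y := by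
    simp only [smul_eq_mul]; field_simp; ring
  rw [hy, smul_eq_mul, smul_eq_mul] at key
  calc (z - y) * f x + (y - x) * f z
      = (z - x) * ((z - y) / (z - x) * f x + (y - x) / (z - x) * f z) := by field_simp
    _ ≤ (z - x) * f y := by gcongr

theorem ConcaveOn.mul_min_le {tb : ℝ} {f : ℝ → ℝ} (hf : ConcaveOn ℝ (Icc 0 tb) f)
    (h0 : 0 ≤ f 0) (htb : 0 ≤ f tb) {t : ℝ} (ht : t ∈ Icc 0 tb) :
    f (tb / 2) * min t (tb - t) ≤ tb / 2 * f t := by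
  have htb0 : 0 ≤ tb := ht.1.trans ht.2
  have hmid : tb / 2 ∈ Icc 0 tb := ⟨by linarith, by linarith⟩
  rcases le_total t (tb / 2) with h | h
  · have := hf.sub_mul_add_sub_mul_le (left_mem_Icc.2 htb0) hmid ht.1 h
    have : 0 ≤ (tb / 2 - t) * f 0 := mul_nonneg (by linarith) h0
    rw [min_eq_left (by linarith)]
    linarith
  · have := hf.sub_mul_add_sub_mul_le hmid (right_mem_Icc.2 htb0) h ht.2
    have : 0 ≤ (t - tb / 2) * f tb := mul_nonneg (by linarith) htb
    rw [min_eq_right (by linarith)]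
    linarith

theorem min_add_le_mul_min {tb s l K : ℝ} (hs : s ≤ K * l) (hts : tb - s ≤ K * (tb - l)) :
    min (s + l) (2 * tb - (s + l)) ≤ (1 + K) * min l (tb - l) := by
  rcases le_total l (tb - l) with h | h
  · rw [min_eq_left h]
    exact (min_le_left _ _).trans (by linarith)
  · rw [min_eq_right h]
    exact (min_le_right _ _).trans (by linarith)

theorem stmt_10_general (tb : ℝ) (htb : 0 < tb) (ζ₀ : ℝ) (hζ₀' : ζ₀ < 1)
    (γ₁ γ₂ : ℝ → ℝ)
    (hsign : ∀ t ∈ Set.Ioo 0 tb, γ₁ t < 0 ∧ 0 < γ₂ t)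
    (hγ₁0 : γ₁ 0 = 0) (hγ₁t : γ₁ tb = 0) (hγ₂0 : γ₂ 0 = 0) (hγ₂t : γ₂ tb = 0)
    (hconc : ConcaveOn ℝ (Set.Icc 0 tb) γ₂) :
    ∃ C > (0:ℝ), ∀ lam : ℝ → ℝ,
      Set.BijOn lam (Set.Icc 0 tb) (Set.Icc 0 tb) →
      StrictMonoOn lam (Set.Icc 0 tb) →
      lam 0 = 0 → lam tb = tb →
      LipschitzOnWith (Real.toNNReal ((1 + ζ₀) / (1 - ζ₀))) lam (Set.Icc 0 tb) →
      (∀ a ∈ Set.Icc 0 tb, ∀ b ∈ Set.Icc 0 tb,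
        |a - b| ≤ (1 + ζ₀) / (1 - ζ₀) * |lam a - lam b|) →
      ∀ s ∈ Set.Icc 0 tb,
        C * min (s + lam s) (2 * tb - (s + lam s)) ≤ γ₂ (lam s) - γ₁ s := by
  set K : ℝ := (1 + ζ₀) / (1 - ζ₀)
  have hK : 0 < 1 + K := by
    have : -1 < K := (lt_div_iff₀ (sub_pos.2 hζ₀')).2 (by linarith)
    linarith
  have hmid : 0 < γ₂ (tb / 2) := (hsign (tb / 2) ⟨half_pos htb, half_lt_self htb⟩).2
  refine ⟨γ₂ (tb / 2) / (tb / 2 * (1 + K)), by positivity, ?_⟩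
  intro lam hbij _ hlam0 hlamtb _ hinv s hs
  have hl := hbij.mapsTo hs
  have hleft := hinv s hs 0 (left_mem_Icc.2 htb.le)
  have hright := hinv s hs tb (right_mem_Icc.2 htb.le)
  rw [hlam0, sub_zero, sub_zero, abs_of_nonneg hs.1, abs_of_nonneg hl.1] at hleft
  rw [hlamtb, abs_sub_comm, abs_of_nonneg (sub_nonneg.2 hs.2), abs_sub_comm,
    abs_of_nonneg (sub_nonneg.2 hl.2)] at hright
  have hγ₁s : γ₁ s ≤ 0 := by
    rcases eq_endpoints_or_mem_Ioo_of_mem_Icc hs with rfl | rfl | h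
    exacts [hγ₁0.le, hγ₁t.le, (hsign s h).1.le]
  have htent := hconc.mul_min_le hγ₂0.ge hγ₂t.ge hl
  calc γ₂ (tb / 2) / (tb / 2 * (1 + K)) * min (s + lam s) (2 * tb - (s + lam s))
      ≤ γ₂ (tb / 2) / (tb / 2 * (1 + K)) * ((1 + K) * min (lam s) (tb - lam s)) := by
        gcongr; exact min_add_le_mul_min hleft hright
    _ = γ₂ (tb / 2) * min (lam s) (tb - lam s) / (tb / 2) := by field_simp
    _ ≤ γ₂ (lam s) := by rwa [div_le_iff₀' (half_pos htb)]
    _ ≤ γ₂ (lam s) - γ₁ s := by linarith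

/-- width lower bound for a lenticular domain: there is `C > 0`
depending only on `γ₁, γ₂, t̄, ζ₀` such that for every bi-Lipschitz increasing
reparametrization `λ` with constant `(1+ζ₀)/(1-ζ₀)` one has
`γ₂(λ(s)) - γ₁(s) ≥ C·min(s + λ(s), 2t̄ - (s + λ(s)))`. -/
theorem stmt_10 (tb : ℝ) (htb : 0 < tb) (ζ₀ : ℝ) (hζ₀ : 0 < ζ₀) (hζ₀' : ζ₀ < 1)
    (γ₁ γ₂ : ℝ → ℝ) (Lγ : NNReal)
    (hγ₁lip : LipschitzOnWith Lγ γ₁ (Set.Icc 0 tb))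
    (hγ₂lip : LipschitzOnWith Lγ γ₂ (Set.Icc 0 tb))
    (hsign : ∀ t ∈ Set.Ioo 0 tb, γ₁ t < 0 ∧ 0 < γ₂ t)
    (hγ₁0 : γ₁ 0 = 0) (hγ₁t : γ₁ tb = 0) (hγ₂0 : γ₂ 0 = 0) (hγ₂t : γ₂ tb = 0)
    (hconv : ConvexOn ℝ (Set.Icc 0 tb) γ₁)
    (hconc : ConcaveOn ℝ (Set.Icc 0 tb) γ₂) :
    ∃ C > (0:ℝ), ∀ lam : ℝ → ℝ,
      Set.BijOn lam (Set.Icc 0 tb) (Set.Icc 0 tb) →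
      StrictMonoOn lam (Set.Icc 0 tb) →
      lam 0 = 0 → lam tb = tb →
      LipschitzOnWith (Real.toNNReal ((1 + ζ₀) / (1 - ζ₀))) lam (Set.Icc 0 tb) →
      (∀ a ∈ Set.Icc 0 tb, ∀ b ∈ Set.Icc 0 tb,
        |a - b| ≤ (1 + ζ₀) / (1 - ζ₀) * |lam a - lam b|) →
      ∀ s ∈ Set.Icc 0 tb,
        C * min (s + lam s) (2 * tb - (s + lam s)) ≤ γ₂ (lam s) - γ₁ s :=
  stmt_10_general tb htb ζ₀ hζ₀' γ₁ γ₂ hsign hγ₁0 hγ₁t hγ₂0 hγ₂t hconc
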